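/- For positive integers a₀,…,a_{r+1} with sum s and positive integers ξ₀,…,ξ_{r+1}, applying the raising operators in the order (Π_{i=0}^{r} e_i^{a_{i+1}+a_{i+2}+⋯+a_{r+1}}) to the monomial X^a = Π X_j^{a_j}, where e_i X^b = [ξ_{i+1} b_{i+1}] X^{b+e_i−e_{i+1}}, yields (Π_{i=1}^{r+1} [a_i + a_{i+1} + ⋯ + a_{r+1}]^{ξ_i}!) · X₀^{s}, with [m]^k! = [km][k(m−1)]⋯[k]. In particular the result is a nonzero multiple of X₀^s. -/

import Mathlib

noncomputable section

/-- The field ℚ(q) of rational functions over ℚ. -/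
abbrev K : Type := RatFunc ℚ

/-- The indeterminate q. -/
def q : K := RatFunc.X

/-- The quantum integer [m]. -/
def qint (m : ℤ) : K := (q ^ m - q ^ (-m)) / (q - q⁻¹)

/-- The modified q-factorial [m]^k! = [km][k(m−1)]⋯[k]. -/
def qfact (k m : ℕ) : K := ∏ j ∈ Finset.range m, qint ((k * (j + 1) : ℕ) : ℤ)

/-- The divided-power monomial X^{(a)} = Π_i X_i^{a_i}/([a_i]^{ξ_i}!). -/
def Xdiv (n : ℕ) (ξ : Fin n → ℕ) (a : Fin n →₀ ℕ) : MvPolynomial (Fin n) K :=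
  (∏ i : Fin n, (qfact (ξ i) (a i))⁻¹) • MvPolynomial.monomial a (1 : K)

/-!
Write `T_i = a_i + ⋯ + a_{r+1}`. When the factor `e_i ^ T_{i+1}` is reached, the exponents beyond
`i + 1` have already been emptied and the `(i+1)`-th exponent is exactly `T_{i+1}`, so this factor
moves it all onto `X_i`, picking up the scalars `[ξ_{i+1} m]` for `m = T_{i+1}, …, 1`, that is
`[T_{i+1}]^{ξ_{i+1}}!`. At the end the whole degree `s = T_0` sits on `X₀`. The factorials are
nonzero because `q` is not a root of unity in `ℚ(q)`.
-/

open MvPolynomial Finsupp Finset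

lemma q_ne_zero : q ≠ 0 := RatFunc.X_ne_zero

lemma q_pow_ne_one {n : ℕ} (hn : 0 < n) : q ^ n ≠ 1 := by
  intro h
  have hdeg := congrArg RatFunc.intDegree h
  rw [q, ← RatFunc.algebraMap_X, ← map_pow, RatFunc.intDegree_polynomial,
    RatFunc.intDegree_one, Polynomial.natDegree_X_pow] at hdeg
  omega

lemma sub_inv_ne_zero_of_sq_ne_one {F : Type*} [Field F] {x : F} (hx0 : x ≠ 0)
    (hx : x ^ 2 ≠ 1) : x - x⁻¹ ≠ 0 := by
  rw [sub_ne_zero]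
  intro h
  exact hx (by rw [sq]; nth_rewrite 2 [h]; exact mul_inv_cancel₀ hx0)

lemma qint_natCast_ne_zero {n : ℕ} (hn : 0 < n) : qint n ≠ 0 := by
  have hsq {k : ℕ} (hk : 0 < k) : (q ^ k) ^ 2 ≠ 1 := by
    rw [← pow_mul]; exact q_pow_ne_one (by positivity)
  rw [qint, zpow_neg, zpow_natCast]
  exact div_ne_zero (sub_inv_ne_zero_of_sq_ne_one (pow_ne_zero _ q_ne_zero) (hsq hn))
    (sub_inv_ne_zero_of_sq_ne_one q_ne_zero (by simpa using hsq one_pos))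

lemma qfact_ne_zero {k : ℕ} (hk : 0 < k) (m : ℕ) : qfact k m ≠ 0 :=
  prod_ne_zero_iff.mpr fun j _ => qint_natCast_ne_zero (by positivity)

section Transfer

variable {σ R : Type*} [CommSemiring R] {e : Module.End R (MvPolynomial σ R)} {x y : σ}
  {c : ℕ → R}

lemma add_single_sub_single_succ (b : σ →₀ ℕ) (n : ℕ) :
    b + single x n - single y n + single x 1 - single y 1
      = b + single x (n + 1) - single y (n + 1) := by
  classical
  ext j
  simp only [Finsupp.tsub_apply, Finsupp.add_apply, single_apply]
  split_ifs <;> omega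

lemma pow_apply_monomial_of_transfer (hxy : x ≠ y)
    (he : ∀ b, e (monomial b 1) = c (b y) • monomial (b + single x 1 - single y 1) 1)
    (b : σ →₀ ℕ) (n : ℕ) :
    (e ^ n) (monomial b 1)
      = (∏ j ∈ range n, c (b y - j)) • monomial (b + single x n - single y n) 1 := by
  induction n with
  | zero => simp
  | succ n ih =>
    have hy : (b + single x n - single y n) y = b y - n := by simp [hxy]
    rw [pow_succ', Module.End.mul_apply, ih, map_smul, he, hy,
      add_single_sub_single_succ, smul_smul, prod_range_succ, mul_comm]

lemma pow_self_apply_monomial_of_transfer (hxy : x ≠ y)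
    (he : ∀ b, e (monomial b 1) = c (b y) • monomial (b + single x 1 - single y 1) 1)
    (b : σ →₀ ℕ) :
    (e ^ b y) (monomial b 1)
      = (∏ j ∈ range (b y), c (j + 1)) • monomial (b + single x (b y) - single y (b y)) 1 := by
  rw [pow_apply_monomial_of_transfer hxy he, ← prod_range_reflect]
  refine congrArg (· • _) (prod_congr rfl fun j hj => congrArg c ?_)
  have := mem_range.mp hj
  omega

end Transfer

section Collapse

variable {n : ℕ} (a : Fin (n + 1) →₀ ℕ)

def tailSum (k : Fin (n + 1)) : ℕ := ∑ j, if k ≤ j then a j else 0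

def collapse (k : Fin (n + 1)) : Fin (n + 1) →₀ ℕ :=
  equivFunOnFinite.symm fun j => if j < k then a j else if j = k then tailSum a k else 0

lemma tailSum_eq_sum_Ici (k : Fin (n + 1)) : tailSum a k = ∑ j ∈ Ici k, a j := by
  rw [tailSum, ← sum_filter, filter_le_eq_Ici]

lemma tailSum_castSucc (i : Fin n) :
    tailSum a i.castSucc = a i.castSucc + tailSum a i.succ := by
  have hIoi : Ioi i.castSucc = Ici i.succ := by
    ext j; simp [Fin.castSucc_lt_iff_succ_le]
  rw [tailSum_eq_sum_Ici, tailSum_eq_sum_Ici, Ici_eq_cons_Ioi, Finset.sum_cons, hIoi]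

lemma collapse_apply (k j : Fin (n + 1)) :
    collapse a k j = if j < k then a j else if j = k then tailSum a k else 0 := rfl

lemma collapse_last : collapse a (Fin.last n) = a := by
  ext j
  have hlast : tailSum a (Fin.last n) = a (Fin.last n) := by
    rw [tailSum_eq_sum_Ici, ← Fin.top_eq_last, Ici_top, sum_singleton]
  rcases (Fin.le_last j).lt_or_eq with hj | rfl
  · simp [collapse_apply, hj]
  · simp [collapse_apply, hlast]

lemma collapse_zero : collapse a 0 = single 0 (∑ j, a j) := by
  ext j
  have hzero : tailSum a 0 = ∑ j, a j := by
    rw [tailSum_eq_sum_Ici, ← bot_eq_zero, Ici_bot]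
  rcases eq_or_ne j 0 with rfl | hj
  · simp [collapse_apply, hzero]
  · simp [collapse_apply, hj]

lemma collapse_castSucc (i : Fin n) :
    collapse a i.succ + single i.castSucc (tailSum a i.succ) - single i.succ (tailSum a i.succ)
      = collapse a i.castSucc := by
  classical
  ext j
  have hstep := tailSum_castSucc a i
  have hlt : i.castSucc < i.succ := Fin.castSucc_lt_succ
  rcases lt_or_ge j i.castSucc with hj | hj
  · simp [collapse_apply, hj, hj.trans hlt, hj.ne, (hj.trans hlt).ne]
  rcases hj.eq_or_lt with rfl | hj
  · simp [collapse_apply, hlt, hlt.ne, hstep, add_comm]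
  rw [Fin.castSucc_lt_iff_succ_le] at hj
  rcases hj.eq_or_lt with rfl | hj
  · simp [collapse_apply, hlt.ne', hlt.not_gt]
  · simp [collapse_apply, hj.not_gt, hj.ne', (hlt.trans hj).not_gt, (hlt.trans hj).ne']

end Collapse

section Raising

variable {n : ℕ} (ξ : Fin (n + 1) → ℕ) (e : Fin n → Module.End K (MvPolynomial (Fin (n + 1)) K))
  (he : ∀ (i : Fin n) (b : Fin (n + 1) →₀ ℕ),
    e i (monomial b (1 : K))
      = qint ((ξ i.succ * b i.succ : ℕ) : ℤ) •
          monomial (b + single i.castSucc 1 - single i.succ 1) (1 : K))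
  (a : Fin (n + 1) →₀ ℕ)

include he in
lemma pow_tailSum_apply_monomial_collapse (i : Fin n) :
    (e i ^ tailSum a i.succ) (monomial (collapse a i.succ) 1)
      = qfact (ξ i.succ) (tailSum a i.succ) • monomial (collapse a i.castSucc) 1 := by
  have hself : collapse a i.succ i.succ = tailSum a i.succ := by simp [collapse_apply]
  have := pow_self_apply_monomial_of_transfer (c := fun m => qint ((ξ i.succ * m : ℕ) : ℤ))
    Fin.castSucc_lt_succ.ne (he i) (collapse a i.succ)
  rwa [hself, collapse_castSucc] at this

lemma prod_filter_castSucc_le {M : Type*} [CommMonoid M] (f : Fin n → M) (i : Fin n) :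
    ∏ i' with i.castSucc ≤ i'.castSucc, f i' = f i * ∏ i' with i.succ ≤ i'.castSucc, f i' := by
  simp only [Fin.castSucc_le_castSucc_iff, Fin.succ_le_castSucc_iff, filter_le_eq_Ici,
    filter_lt_eq_Ioi, Ici_eq_cons_Ioi, prod_cons]

include he in
lemma drop_prod_apply_monomial (k : Fin (n + 1)) :
    ((List.ofFn fun i => e i ^ tailSum a i.succ).drop k).prod (monomial a 1)
      = (∏ i : Fin n with k ≤ i.castSucc, qfact (ξ i.succ) (tailSum a i.succ)) •
          monomial (collapse a k) 1 := by
  induction k using Fin.reverseInduction with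
  | last => simp [collapse_last, List.drop_eq_nil_of_le]
  | cast i ih =>
    have hi : (i.castSucc : ℕ) < (List.ofFn fun i => e i ^ tailSum a i.succ).length := by simp
    rw [List.drop_eq_getElem_cons hi, List.prod_cons, Module.End.mul_apply, List.getElem_ofFn]
    simp only [Fin.val_castSucc, Fin.eta]
    rw [← Fin.val_succ, ih, map_smul, pow_tailSum_apply_monomial_collapse ξ e he,
      smul_smul, prod_filter_castSucc_le, mul_comm]

end Raising

theorem stmt19_general (r s : ℕ) (ξ : Fin (r + 2) → ℕ) (hξ : ∀ i, 0 < ξ i)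
    (a : Fin (r + 2) →₀ ℕ) (has : (∑ j : Fin (r + 2), a j) = s)
    (e : Fin (r + 1) → Module.End K (MvPolynomial (Fin (r + 2)) K))
    (he : ∀ (i : Fin (r + 1)) (b : Fin (r + 2) →₀ ℕ),
      e i (MvPolynomial.monomial b (1 : K))
        = qint ((ξ i.succ * b i.succ : ℕ) : ℤ) •
            MvPolynomial.monomial
              (b + Finsupp.single i.castSucc 1 - Finsupp.single i.succ 1) (1 : K)) :
    (List.ofFn (fun i : Fin (r + 1) =>
        e i ^ (∑ j : Fin (r + 2), if i.succ ≤ j then a j else 0))).prod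
        (MvPolynomial.monomial a (1 : K))
      = (∏ i : Fin (r + 1),
          qfact (ξ i.succ) (∑ j : Fin (r + 2), if i.succ ≤ j then a j else 0)) •
          MvPolynomial.monomial (Finsupp.single 0 s) (1 : K) ∧
    (∏ i : Fin (r + 1),
        qfact (ξ i.succ) (∑ j : Fin (r + 2), if i.succ ≤ j then a j else 0)) ≠ 0 := by
  refine ⟨?_, prod_ne_zero_iff.mpr fun i _ => qfact_ne_zero (hξ i.succ) _⟩
  have h := drop_prod_apply_monomial ξ e he a 0
  simp only [Fin.val_zero, List.drop_zero, Fin.zero_le, filter_true, collapse_zero, has] at h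
  exact h

/-- applying (Π_{i=0}^{r} e_i^{a_{i+1}+⋯+a_{r+1}}) (with e_r first and
e₀ last) to X^a yields (Π_{i=1}^{r+1} [a_i+⋯+a_{r+1}]^{ξ_i}!)·X₀^s, a nonzero
multiple of X₀^s. -/
theorem stmt19 (r s : ℕ) (ξ : Fin (r + 2) → ℕ) (hξ : ∀ i, 0 < ξ i)
    (a : Fin (r + 2) →₀ ℕ) (ha : ∀ i, 0 < a i) (has : (∑ j : Fin (r + 2), a j) = s)
    (e : Fin (r + 1) → Module.End K (MvPolynomial (Fin (r + 2)) K))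
    (he : ∀ (i : Fin (r + 1)) (b : Fin (r + 2) →₀ ℕ),
      e i (MvPolynomial.monomial b (1 : K))
        = qint ((ξ i.succ * b i.succ : ℕ) : ℤ) •
            MvPolynomial.monomial
              (b + Finsupp.single i.castSucc 1 - Finsupp.single i.succ 1) (1 : K)) :
    (List.ofFn (fun i : Fin (r + 1) =>
        e i ^ (∑ j : Fin (r + 2), if i.succ ≤ j then a j else 0))).prod
        (MvPolynomial.monomial a (1 : K))
      = (∏ i : Fin (r + 1),
          qfact (ξ i.succ) (∑ j : Fin (r + 2), if i.succ ≤ j then a j else 0)) •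
          MvPolynomial.monomial (Finsupp.single 0 s) (1 : K) ∧
    (∏ i : Fin (r + 1),
        qfact (ξ i.succ) (∑ j : Fin (r + 2), if i.succ ≤ j then a j else 0)) ≠ 0 :=
  stmt19_general r s ξ hξ a has e he
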